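/- arXiv:1308.3889 — 2 statements merged into one kernel-verified Lean document; each statement's English description precedes it below -/
import Mathlib

section
/- Let μ be the standard Gaussian on ℝ³ and J_α(v) := ∫_{ℝ³} |v−w|^α μ(w) dw. For every α with 2 < α ≤ 3 and every v ∈ ℝ³, J_α(v) ≤ |v|^α + 10^{α/4} |v|^{α/2} + M_4(μ)^{α/4} = |v|^α + 10^{α/4} |v|^{α/2} + 15^{α/4}. -/
open MeasureTheory Real

noncomputable section

/-- The standard Gaussian on ℝ³. -/
def gauss (v : EuclideanSpace ℝ (Fin 3)) : ℝ :=
  (2 * π) ^ (-(3 : ℝ) / 2) * Real.exp (-‖v‖ ^ 2 / 2)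

/-- `J_α(v) = ∫ |v - w|^α μ(w) dw`. -/
def Jfun (α : ℝ) (v : EuclideanSpace ℝ (Fin 3)) : ℝ :=
  ∫ w : EuclideanSpace ℝ (Fin 3), ‖v - w‖ ^ α * gauss w

/-- `M_α(μ) = ∫ |w|^α μ(w) dw`. -/
def Mmom (α : ℝ) : ℝ :=
  ∫ w : EuclideanSpace ℝ (Fin 3), ‖w‖ ^ α * gauss w

namespace Stmt3Aux

def φ (x : ℝ) : ℝ := Real.exp (-x ^ 2 / 2)

lemma φ_pos (x : ℝ) : 0 < φ x := Real.exp_pos _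

lemma integrable_monomial (k : ℕ) : Integrable fun x : ℝ => x ^ k * φ x := by
  have h := integrable_rpow_mul_exp_neg_mul_sq (b := (1/2:ℝ)) (by norm_num)
    (s := (k:ℝ)) (by exact_mod_cast neg_one_lt_zero.trans_le (Nat.cast_nonneg k))
  refine h.congr ?_
  filter_upwards with x
  rw [Real.rpow_natCast, φ]
  ring_nf

lemma m0 : ∫ x : ℝ, φ x = Real.sqrt (2 * π) := by
  simp_rw [φ, show ∀ x : ℝ, -x ^ 2 / 2 = -(1/2) * x ^ 2 from fun x => by ring]
  rw [integral_gaussian, show π / (1/2 : ℝ) = 2 * π by ring]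

lemma m_odd {k : ℕ} (hk : Odd k) : ∫ x : ℝ, x ^ k * φ x = 0 := by
  have h := integral_neg_eq_self (fun x : ℝ => x ^ k * φ x) (volume : Measure ℝ)
  have e : ∀ x : ℝ, (-x) ^ k * φ (-x) = -(x ^ k * φ x) := by
    intro x; rw [hk.neg_pow, φ, φ, neg_sq]; ring
  simp only [e, integral_neg] at h
  linarith

lemma moment_Ioi (k : ℕ) : ∫ x in Set.Ioi (0:ℝ), x ^ k * φ x
    = (1/2 : ℝ) ^ (-((k:ℝ) + 1)/2) * (1/2) * Real.Gamma (((k:ℝ) + 1)/2) := by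
  rw [← integral_rpow_mul_exp_neg_mul_rpow (p := 2) (q := (k:ℝ)) (b := 1/2)
    (by norm_num) (by exact_mod_cast neg_one_lt_zero.trans_le (Nat.cast_nonneg k)) (by norm_num)]
  refine setIntegral_congr_fun measurableSet_Ioi (fun x hx => ?_)
  rw [Real.rpow_natCast, φ, show (2:ℝ) = ((2:ℕ):ℝ) by norm_num, Real.rpow_natCast]
  ring_nf

lemma moment_even (k : ℕ) : ∫ x : ℝ, x ^ (2*k) * φ x
    = 2 * ∫ x in Set.Ioi (0:ℝ), x ^ (2*k) * φ x := by
  rw [← integral_comp_abs (f := fun x => x ^ (2*k) * φ x)]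
  congr 1; funext x
  rw [pow_abs, abs_of_nonneg (Even.pow_nonneg ⟨k, by ring⟩ x), φ, φ, sq_abs]

lemma half_rpow (y : ℝ) : (1/2 : ℝ) ^ (-y) = (2:ℝ) ^ y := by
  rw [one_div, Real.inv_rpow (by norm_num), Real.rpow_neg (by norm_num), inv_inv]

lemma two_rpow_3half : (2:ℝ) ^ ((3:ℝ)/2) = 2 * Real.sqrt 2 := by
  rw [show (3:ℝ)/2 = 1 + 1/2 by norm_num, Real.rpow_add (by norm_num), Real.rpow_one,
    ← Real.sqrt_eq_rpow]

lemma two_rpow_5half : (2:ℝ) ^ ((5:ℝ)/2) = 4 * Real.sqrt 2 := by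
  rw [show (5:ℝ)/2 = 2 + 1/2 by norm_num, Real.rpow_add (by norm_num),
    ← Real.sqrt_eq_rpow, show (2:ℝ) ^ (2:ℝ) = 4 by
      rw [show (2:ℝ) = ((2:ℕ):ℝ) by norm_num, Real.rpow_natCast]; norm_num]

lemma m2 : ∫ x : ℝ, x ^ 2 * φ x = Real.sqrt (2 * π) := by
  have h := moment_even 1
  norm_num [moment_Ioi 2] at h
  rw [h, show (-(3/2) : ℝ) = -((3:ℝ)/2) by norm_num, half_rpow, two_rpow_3half,
    show (3/2 : ℝ) = 1/2 + 1 by norm_num, Real.Gamma_add_one (by norm_num),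
    Real.Gamma_one_half_eq, Real.sqrt_mul (by norm_num : (0:ℝ) ≤ 2)]
  ring

lemma m4 : ∫ x : ℝ, x ^ 4 * φ x = 3 * Real.sqrt (2 * π) := by
  have h := moment_even 2
  norm_num [moment_Ioi 4] at h
  rw [h, show (-(5/2) : ℝ) = -((5:ℝ)/2) by norm_num, half_rpow, two_rpow_5half,
    show (5/2 : ℝ) = 3/2 + 1 by norm_num, Real.Gamma_add_one (by norm_num),
    show (3/2 : ℝ) = 1/2 + 1 by norm_num, Real.Gamma_add_one (by norm_num),
    Real.Gamma_one_half_eq, Real.sqrt_mul (by norm_num : (0:ℝ) ≤ 2)]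
  ring
lemma q0_eq (t : ℝ) : (fun x : ℝ => (t - x) ^ 0 * φ x) = fun x : ℝ => x ^ 0 * φ x := by
  funext x; norm_num

lemma q2_eq (t : ℝ) : (fun x : ℝ => (t - x) ^ 2 * φ x)
    = fun x : ℝ => t^2 * (x ^ 0 * φ x) + ((-2*t) * (x ^ 1 * φ x) + 1 * (x ^ 2 * φ x)) := by
  funext x; ring

lemma q4_eq (t : ℝ) : (fun x : ℝ => (t - x) ^ 4 * φ x)
    = fun x : ℝ => t^4 * (x ^ 0 * φ x) + ((-4*t^3) * (x ^ 1 * φ x) + (6*t^2 * (x ^ 2 * φ x)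
        + ((-4*t) * (x ^ 3 * φ x) + 1 * (x ^ 4 * φ x)))) := by
  funext x; ring

lemma q0_int (t : ℝ) : Integrable fun x : ℝ => (t - x) ^ 0 * φ x := by
  rw [q0_eq]; exact integrable_monomial 0

lemma q2_int (t : ℝ) : Integrable fun x : ℝ => (t - x) ^ 2 * φ x := by
  rw [q2_eq]
  exact ((integrable_monomial 0).const_mul _).add (((integrable_monomial 1).const_mul _).add
    ((integrable_monomial 2).const_mul _))

lemma q4_int (t : ℝ) : Integrable fun x : ℝ => (t - x) ^ 4 * φ x := by
  rw [q4_eq]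
  exact ((integrable_monomial 0).const_mul _).add (((integrable_monomial 1).const_mul _).add
    (((integrable_monomial 2).const_mul _).add (((integrable_monomial 3).const_mul _).add
    ((integrable_monomial 4).const_mul _))))

lemma q0_val (t : ℝ) : ∫ x : ℝ, (t - x) ^ 0 * φ x = Real.sqrt (2 * π) := by
  rw [q0_eq]
  simpa using m0

lemma m0' : ∫ x : ℝ, x ^ 0 * φ x = Real.sqrt (2 * π) := by simpa using m0

lemma q2_val (t : ℝ) : ∫ x : ℝ, (t - x) ^ 2 * φ x = (t^2 + 1) * Real.sqrt (2 * π) := by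
  have h1 : Integrable (fun x : ℝ => t^2 * (x ^ 0 * φ x)) := (integrable_monomial 0).const_mul _
  have h2 : Integrable (fun x : ℝ => (-2*t) * (x ^ 1 * φ x)) := (integrable_monomial 1).const_mul _
  have h3 : Integrable (fun x : ℝ => 1 * (x ^ 2 * φ x)) := (integrable_monomial 2).const_mul _
  have h23 : Integrable (fun x : ℝ => (-2*t) * (x ^ 1 * φ x) + 1 * (x ^ 2 * φ x)) := h2.add h3
  rw [q2_eq, integral_add h1 h23, integral_add h2 h3,
    integral_const_mul, integral_const_mul, integral_const_mul, m0',
    m_odd ⟨0, by norm_num⟩, m2]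
  ring

lemma q4_val (t : ℝ) : ∫ x : ℝ, (t - x) ^ 4 * φ x
    = (t^4 + 6*t^2 + 3) * Real.sqrt (2 * π) := by
  have h1 : Integrable (fun x : ℝ => t^4 * (x ^ 0 * φ x)) := (integrable_monomial 0).const_mul _
  have h2 : Integrable (fun x : ℝ => (-4*t^3) * (x ^ 1 * φ x)) :=
    (integrable_monomial 1).const_mul _
  have h3 : Integrable (fun x : ℝ => 6*t^2 * (x ^ 2 * φ x)) := (integrable_monomial 2).const_mul _
  have h4 : Integrable (fun x : ℝ => (-4*t) * (x ^ 3 * φ x)) := (integrable_monomial 3).const_mul _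
  have h5 : Integrable (fun x : ℝ => 1 * (x ^ 4 * φ x)) := (integrable_monomial 4).const_mul _
  have h45 : Integrable (fun x : ℝ => (-4*t) * (x ^ 3 * φ x) + 1 * (x ^ 4 * φ x)) := h4.add h5
  have h35 : Integrable (fun x : ℝ => 6*t^2 * (x ^ 2 * φ x)
      + ((-4*t) * (x ^ 3 * φ x) + 1 * (x ^ 4 * φ x))) := h3.add h45
  have h25 : Integrable (fun x : ℝ => (-4*t^3) * (x ^ 1 * φ x) + (6*t^2 * (x ^ 2 * φ x)
      + ((-4*t) * (x ^ 3 * φ x) + 1 * (x ^ 4 * φ x)))) := h2.add h35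
  rw [q4_eq, integral_add h1 h25, integral_add h2 h35, integral_add h3 h45, integral_add h4 h5,
    integral_const_mul, integral_const_mul, integral_const_mul, integral_const_mul,
    integral_const_mul, m0', m_odd ⟨0, by norm_num⟩, m2, m_odd ⟨1, by norm_num⟩, m4]
  ring


abbrev E3 := EuclideanSpace ℝ (Fin 3)

lemma integral_euclid_prod (g0 g1 g2 : ℝ → ℝ) :
    ∫ w : E3, g0 (w 0) * g1 (w 1) * g2 (w 2)
      = (∫ x, g0 x) * (∫ x, g1 x) * (∫ x, g2 x) := by
  have h := (EuclideanSpace.volume_preserving_symm_measurableEquiv_toLp (ι := Fin 3)).integral_comp'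
    (fun x : Fin 3 → ℝ => g0 (x 0) * g1 (x 1) * g2 (x 2))
  calc ∫ w : E3, g0 (w 0) * g1 (w 1) * g2 (w 2)
      = ∫ x : Fin 3 → ℝ, g0 (x 0) * g1 (x 1) * g2 (x 2) := h
    _ = ∫ x : Fin 3 → ℝ, ∏ i, ![g0, g1, g2] i (x i) := by
        congr 1; funext x; rw [Fin.prod_univ_three]; rfl
    _ = ∏ i, ∫ x : ℝ, ![g0, g1, g2] i x :=
        MeasureTheory.integral_fintype_prod_eq_prod (ι := Fin 3) ![g0, g1, g2]
    _ = _ := by rw [Fin.prod_univ_three]; rfl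

lemma integrable_euclid_prod (g0 g1 g2 : ℝ → ℝ) (h0 : Integrable g0) (h1 : Integrable g1)
    (h2 : Integrable g2) :
    Integrable fun w : E3 => g0 (w 0) * g1 (w 1) * g2 (w 2) := by
  have H : Integrable (fun x : Fin 3 → ℝ => ∏ i, ![g0, g1, g2] i (x i)) :=
    Integrable.fin_nat_prod (fun i => by fin_cases i <;> simpa)
  have h := (MeasurePreserving.integrable_comp_emb
    (EuclideanSpace.volume_preserving_symm_measurableEquiv_toLp (ι := Fin 3))
    (MeasurableEquiv.measurableEmbedding _)).mpr H
  refine h.congr ?_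
  filter_upwards with w
  simp only [Function.comp_apply, Fin.prod_univ_three]
  rfl

lemma gauss_eq (w : E3) :
    gauss w = (2*π) ^ (-(3:ℝ)/2) * (φ (w 0) * φ (w 1) * φ (w 2)) := by
  rw [gauss]
  congr 1
  have hnorm : ‖w‖ ^ 2 = w 0 ^ 2 + w 1 ^ 2 + w 2 ^ 2 := by
    rw [EuclideanSpace.norm_eq, Real.sq_sqrt (by positivity), Fin.sum_univ_three]
    simp [Real.norm_eq_abs, sq_abs]
  rw [show -‖w‖^2/2 = -(w 0)^2/2 + (-(w 1)^2/2 + -(w 2)^2/2) by rw [hnorm]; ring,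
    Real.exp_add, Real.exp_add, φ, φ, φ, mul_assoc]

lemma c_s3 : (2*π) ^ (-(3:ℝ)/2) * Real.sqrt (2*π) ^ 3 = 1 := by
  rw [Real.sqrt_eq_rpow, ← Real.rpow_natCast ((2*π) ^ ((1:ℝ)/2)) 3,
    ← Real.rpow_mul (by positivity), ← Real.rpow_add (by positivity)]
  norm_num

lemma int_gauss : Integrable gauss ∧ ∫ w : E3, gauss w = 1 := by
  have he : gauss = fun w : E3 => (2*π) ^ (-(3:ℝ)/2) * (φ (w 0) * φ (w 1) * φ (w 2)) :=
    funext gauss_eq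
  have hm := integrable_monomial 0
  simp only [pow_zero, one_mul] at hm
  constructor
  · rw [he]
    exact ((integrable_euclid_prod φ φ φ hm hm hm).const_mul _).congr
      (by filter_upwards with w; ring)
  · rw [he, integral_const_mul, integral_euclid_prod, m0]
    linear_combination c_s3


lemma int4 (v : E3) : Integrable (fun w : E3 => ‖v - w‖ ^ 4 * gauss w) ∧
    ∫ w : E3, ‖v - w‖ ^ 4 * gauss w = ‖v‖^4 + 10*‖v‖^2 + 15 := by
  have expand : ∀ w : E3, ‖v - w‖ ^ 4 * gauss w =
      (2*π) ^ (-(3:ℝ)/2) *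
      ( ((v 0 - w 0)^4 * φ (w 0)) * ((v 1 - w 1)^0 * φ (w 1)) * ((v 2 - w 2)^0 * φ (w 2))
      + ( ((v 0 - w 0)^0 * φ (w 0)) * ((v 1 - w 1)^4 * φ (w 1)) * ((v 2 - w 2)^0 * φ (w 2))
      + ( ((v 0 - w 0)^0 * φ (w 0)) * ((v 1 - w 1)^0 * φ (w 1)) * ((v 2 - w 2)^4 * φ (w 2))
      + ( (2*((v 0 - w 0)^2 * φ (w 0))) * ((v 1 - w 1)^2 * φ (w 1)) * ((v 2 - w 2)^0 * φ (w 2))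
      + ( (2*((v 0 - w 0)^2 * φ (w 0))) * ((v 1 - w 1)^0 * φ (w 1)) * ((v 2 - w 2)^2 * φ (w 2))
      + (2*((v 0 - w 0)^0 * φ (w 0))) * ((v 1 - w 1)^2 * φ (w 1)) * ((v 2 - w 2)^2 * φ (w 2))
      ))))) := by
    intro w
    have hnorm : ‖v - w‖^2 = (v 0 - w 0)^2 + (v 1 - w 1)^2 + (v 2 - w 2)^2 := by
      rw [EuclideanSpace.norm_eq, Real.sq_sqrt (by positivity), Fin.sum_univ_three]
      simp [Real.norm_eq_abs, sq_abs]
    have h4 : ‖v - w‖^4 = (‖v - w‖^2)^2 := by ring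
    rw [h4, hnorm, gauss_eq w]
    ring
  have hint1 : Integrable (fun w : E3 =>
      ((v 0 - w 0)^4 * φ (w 0)) * ((v 1 - w 1)^0 * φ (w 1)) * ((v 2 - w 2)^0 * φ (w 2))) :=
    integrable_euclid_prod _ _ _ (q4_int _) (q0_int _) (q0_int _)
  have hint2 : Integrable (fun w : E3 =>
      ((v 0 - w 0)^0 * φ (w 0)) * ((v 1 - w 1)^4 * φ (w 1)) * ((v 2 - w 2)^0 * φ (w 2))) :=
    integrable_euclid_prod _ _ _ (q0_int _) (q4_int _) (q0_int _)
  have hint3 : Integrable (fun w : E3 =>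
      ((v 0 - w 0)^0 * φ (w 0)) * ((v 1 - w 1)^0 * φ (w 1)) * ((v 2 - w 2)^4 * φ (w 2))) :=
    integrable_euclid_prod _ _ _ (q0_int _) (q0_int _) (q4_int _)
  have hint4 : Integrable (fun w : E3 =>
      (2*((v 0 - w 0)^2 * φ (w 0))) * ((v 1 - w 1)^2 * φ (w 1)) * ((v 2 - w 2)^0 * φ (w 2))) :=
    integrable_euclid_prod _ _ _ ((q2_int _).const_mul 2) (q2_int _) (q0_int _)
  have hint5 : Integrable (fun w : E3 =>
      (2*((v 0 - w 0)^2 * φ (w 0))) * ((v 1 - w 1)^0 * φ (w 1)) * ((v 2 - w 2)^2 * φ (w 2))) :=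
    integrable_euclid_prod _ _ _ ((q2_int _).const_mul 2) (q0_int _) (q2_int _)
  have hint6 : Integrable (fun w : E3 =>
      (2*((v 0 - w 0)^0 * φ (w 0))) * ((v 1 - w 1)^2 * φ (w 1)) * ((v 2 - w 2)^2 * φ (w 2))) :=
    integrable_euclid_prod _ _ _ ((q0_int _).const_mul 2) (q2_int _) (q2_int _)
  have h56 : Integrable (fun w : E3 =>
      (2*((v 0 - w 0)^2 * φ (w 0))) * ((v 1 - w 1)^0 * φ (w 1)) * ((v 2 - w 2)^2 * φ (w 2))
      + (2*((v 0 - w 0)^0 * φ (w 0))) * ((v 1 - w 1)^2 * φ (w 1)) * ((v 2 - w 2)^2 * φ (w 2))) :=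
    hint5.add hint6
  have h46 : Integrable (fun w : E3 =>
      (2*((v 0 - w 0)^2 * φ (w 0))) * ((v 1 - w 1)^2 * φ (w 1)) * ((v 2 - w 2)^0 * φ (w 2))
      + ((2*((v 0 - w 0)^2 * φ (w 0))) * ((v 1 - w 1)^0 * φ (w 1)) * ((v 2 - w 2)^2 * φ (w 2))
      + (2*((v 0 - w 0)^0 * φ (w 0))) * ((v 1 - w 1)^2 * φ (w 1)) * ((v 2 - w 2)^2 * φ (w 2)))) :=
    hint4.add h56
  have h36 : Integrable (fun w : E3 =>
      ((v 0 - w 0)^0 * φ (w 0)) * ((v 1 - w 1)^0 * φ (w 1)) * ((v 2 - w 2)^4 * φ (w 2))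
      + ((2*((v 0 - w 0)^2 * φ (w 0))) * ((v 1 - w 1)^2 * φ (w 1)) * ((v 2 - w 2)^0 * φ (w 2))
      + ((2*((v 0 - w 0)^2 * φ (w 0))) * ((v 1 - w 1)^0 * φ (w 1)) * ((v 2 - w 2)^2 * φ (w 2))
      + (2*((v 0 - w 0)^0 * φ (w 0))) * ((v 1 - w 1)^2 * φ (w 1)) * ((v 2 - w 2)^2 * φ (w 2))))) :=
    hint3.add h46
  have h26 : Integrable (fun w : E3 =>
      ((v 0 - w 0)^0 * φ (w 0)) * ((v 1 - w 1)^4 * φ (w 1)) * ((v 2 - w 2)^0 * φ (w 2))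
      + (((v 0 - w 0)^0 * φ (w 0)) * ((v 1 - w 1)^0 * φ (w 1)) * ((v 2 - w 2)^4 * φ (w 2))
      + ((2*((v 0 - w 0)^2 * φ (w 0))) * ((v 1 - w 1)^2 * φ (w 1)) * ((v 2 - w 2)^0 * φ (w 2))
      + ((2*((v 0 - w 0)^2 * φ (w 0))) * ((v 1 - w 1)^0 * φ (w 1)) * ((v 2 - w 2)^2 * φ (w 2))
      + (2*((v 0 - w 0)^0 * φ (w 0))) * ((v 1 - w 1)^2 * φ (w 1)) * ((v 2 - w 2)^2 * φ (w 2)))))) :=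
    hint2.add h36
  constructor
  · rw [show (fun w : E3 => ‖v - w‖ ^ 4 * gauss w) = _ from funext expand]
    exact (hint1.add h26).const_mul _
  · have T1 : ∫ w : E3, ((v 0 - w 0)^4 * φ (w 0)) * ((v 1 - w 1)^0 * φ (w 1))
        * ((v 2 - w 2)^0 * φ (w 2))
        = ((v 0^4 + 6*v 0^2 + 3) * Real.sqrt (2*π)) * Real.sqrt (2*π) * Real.sqrt (2*π) := by
      have h := integral_euclid_prod (fun x => (v 0 - x)^4 * φ x)
        (fun x => (v 1 - x)^0 * φ x) (fun x => (v 2 - x)^0 * φ x)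
      simp only [q4_val, q0_val] at h
      exact h
    have T2 : ∫ w : E3, ((v 0 - w 0)^0 * φ (w 0)) * ((v 1 - w 1)^4 * φ (w 1))
        * ((v 2 - w 2)^0 * φ (w 2))
        = Real.sqrt (2*π) * ((v 1^4 + 6*v 1^2 + 3) * Real.sqrt (2*π)) * Real.sqrt (2*π) := by
      have h := integral_euclid_prod (fun x => (v 0 - x)^0 * φ x)
        (fun x => (v 1 - x)^4 * φ x) (fun x => (v 2 - x)^0 * φ x)
      simp only [q4_val, q0_val] at h
      exact h
    have T3 : ∫ w : E3, ((v 0 - w 0)^0 * φ (w 0)) * ((v 1 - w 1)^0 * φ (w 1))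
        * ((v 2 - w 2)^4 * φ (w 2))
        = Real.sqrt (2*π) * Real.sqrt (2*π) * ((v 2^4 + 6*v 2^2 + 3) * Real.sqrt (2*π)) := by
      have h := integral_euclid_prod (fun x => (v 0 - x)^0 * φ x)
        (fun x => (v 1 - x)^0 * φ x) (fun x => (v 2 - x)^4 * φ x)
      simp only [q4_val, q0_val] at h
      exact h
    have T4 : ∫ w : E3, (2*((v 0 - w 0)^2 * φ (w 0))) * ((v 1 - w 1)^2 * φ (w 1))
        * ((v 2 - w 2)^0 * φ (w 2))
        = (2*((v 0^2 + 1) * Real.sqrt (2*π))) * ((v 1^2 + 1) * Real.sqrt (2*π))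
          * Real.sqrt (2*π) := by
      have h := integral_euclid_prod (fun x => 2*((v 0 - x)^2 * φ x))
        (fun x => (v 1 - x)^2 * φ x) (fun x => (v 2 - x)^0 * φ x)
      simp only [integral_const_mul, q2_val, q0_val] at h
      exact h
    have T5 : ∫ w : E3, (2*((v 0 - w 0)^2 * φ (w 0))) * ((v 1 - w 1)^0 * φ (w 1))
        * ((v 2 - w 2)^2 * φ (w 2))
        = (2*((v 0^2 + 1) * Real.sqrt (2*π))) * Real.sqrt (2*π)
          * ((v 2^2 + 1) * Real.sqrt (2*π)) := by
      have h := integral_euclid_prod (fun x => 2*((v 0 - x)^2 * φ x))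
        (fun x => (v 1 - x)^0 * φ x) (fun x => (v 2 - x)^2 * φ x)
      simp only [integral_const_mul, q2_val, q0_val] at h
      exact h
    have T6 : ∫ w : E3, (2*((v 0 - w 0)^0 * φ (w 0))) * ((v 1 - w 1)^2 * φ (w 1))
        * ((v 2 - w 2)^2 * φ (w 2))
        = (2*Real.sqrt (2*π)) * ((v 1^2 + 1) * Real.sqrt (2*π))
          * ((v 2^2 + 1) * Real.sqrt (2*π)) := by
      have h := integral_euclid_prod (fun x => 2*((v 0 - x)^0 * φ x))
        (fun x => (v 1 - x)^2 * φ x) (fun x => (v 2 - x)^2 * φ x)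
      simp only [integral_const_mul, q2_val, q0_val] at h
      exact h
    have hnv : ‖v‖^2 = v 0^2 + v 1^2 + v 2^2 := by
      rw [EuclideanSpace.norm_eq, Real.sq_sqrt (by positivity), Fin.sum_univ_three]
      simp [Real.norm_eq_abs, sq_abs]
    rw [show (fun w : E3 => ‖v - w‖ ^ 4 * gauss w) = _ from funext expand, integral_const_mul,
      integral_add hint1 h26, integral_add hint2 h36, integral_add hint3 h46,
      integral_add hint4 h56, integral_add hint5 hint6, T1, T2, T3, T4, T5, T6,
      show ‖v‖^4 = (‖v‖^2)^2 by ring, hnv]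
    linear_combination ((v 0^2 + v 1^2 + v 2^2)^2 + 10*(v 0^2 + v 1^2 + v 2^2) + 15) * c_s3


lemma gauss_pos (w : E3) : 0 < gauss w := by
  rw [gauss]; positivity

lemma gauss_continuous : Continuous gauss := by
  unfold gauss
  exact continuous_const.mul (Real.continuous_exp.comp
    (((continuous_norm.pow 2).neg).div_const 2))

lemma add_rpow_le (p : ℝ) (hp0 : 0 ≤ p) (hp1 : p ≤ 1) {a b : ℝ} (ha : 0 ≤ a) (hb : 0 ≤ b) :
    (a + b) ^ p ≤ a ^ p + b ^ p := by
  have h := NNReal.rpow_add_le_add_rpow a.toNNReal b.toNNReal hp0 hp1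
  have h' := (NNReal.coe_le_coe).2 h
  simp only [NNReal.coe_rpow, NNReal.coe_add, Real.coe_toNNReal a ha,
    Real.coe_toNNReal b hb] at h'
  exact h'

lemma add3_rpow_le (p : ℝ) (hp0 : 0 ≤ p) (hp1 : p ≤ 1) {a b c : ℝ}
    (ha : 0 ≤ a) (hb : 0 ≤ b) (hc : 0 ≤ c) :
    (a + b + c) ^ p ≤ a ^ p + b ^ p + c ^ p := by
  calc (a + b + c) ^ p ≤ (a + b) ^ p + c ^ p :=
        add_rpow_le p hp0 hp1 (by positivity) hc
    _ ≤ a ^ p + b ^ p + c ^ p := by linarith [add_rpow_le p hp0 hp1 ha hb]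

end Stmt3Aux

open Stmt3Aux in
/-- For `2 < α ≤ 3` and every `v`,
`J_α(v) ≤ |v|^α + 10^{α/4} |v|^{α/2} + M₄(μ)^{α/4} = |v|^α + 10^{α/4} |v|^{α/2} + 15^{α/4}`. -/
theorem stmt3 (α : ℝ) (hα0 : 2 < α) (hα1 : α ≤ 3) (v : EuclideanSpace ℝ (Fin 3)) :
    Jfun α v ≤ ‖v‖ ^ α + 10 ^ (α / 4) * ‖v‖ ^ (α / 2) + Mmom 4 ^ (α / 4) ∧ Mmom 4 = 15 := by
  obtain ⟨h4i, h4v⟩ := int4 v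
  obtain ⟨hgi, hgv⟩ := int_gauss
  have hα4 : α < 4 := by linarith
  have hαpos : (0:ℝ) < α := by linarith
  have hM : Mmom 4 = 15 := by
    have h := (int4 0).2
    rw [Mmom, show (fun w : E3 => ‖w‖ ^ (4:ℝ) * gauss w)
        = fun w : E3 => ‖(0:E3) - w‖ ^ 4 * gauss w from funext fun w => by
      rw [zero_sub, norm_neg, show (4:ℝ) = ((4:ℕ):ℝ) by norm_num, Real.rpow_natCast], h]
    simp
  refine ⟨?_, hM⟩
  rw [hM]
  set A : ℝ := ‖v‖^4 + 10*‖v‖^2 + 15 with hA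
  have hA0 : (0:ℝ) ≤ A := by positivity
  have hcont : Continuous fun w : E3 => ‖v - w‖ ^ α * gauss w := by
    exact ((continuous_const.sub continuous_id).norm.rpow_const
      (fun w => Or.inr hαpos.le)).mul gauss_continuous
  have hnn : ∀ w : E3, 0 ≤ ‖v - w‖ ^ α * gauss w := fun w =>
    mul_nonneg (Real.rpow_nonneg (norm_nonneg _) _) (gauss_pos w).le
  have step1 : Jfun α v = (∫⁻ w : E3, ENNReal.ofReal (‖v - w‖ ^ α * gauss w)).toReal := by
    rw [Jfun, integral_eq_lintegral_of_nonneg_ae (Filter.Eventually.of_forall hnn)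
      hcont.aestronglyMeasurable]
  set p : ℝ := 4/α with hp
  set q : ℝ := 4/(4-α) with hq
  have hppos : 0 < p := by positivity
  have h4ne : (4:ℝ) - α ≠ 0 := by linarith
  have hpq : p.HolderConjugate q := by
    constructor
    · rw [hp, hq, inv_div, inv_div, inv_one]; ring
    · exact hppos
    · rw [hq]; apply div_pos (by norm_num); linarith
  set F : E3 → ENNReal := fun w => ENNReal.ofReal (‖v - w‖ ^ α)
      * ENNReal.ofReal (gauss w) ^ (α/4) with hF
  set G : E3 → ENNReal := fun w => ENNReal.ofReal (gauss w) ^ ((4-α)/4) with hG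
  have hnormm : Measurable fun w : E3 => ‖v - w‖ ^ α :=
    ((continuous_const.sub continuous_id).norm.rpow_const
      (fun w => Or.inr hαpos.le)).measurable
  have hgm : Measurable gauss := gauss_continuous.measurable
  have hFm : AEMeasurable F := (hnormm.ennreal_ofReal.mul
    (ENNReal.continuous_rpow_const.measurable.comp hgm.ennreal_ofReal)).aemeasurable
  have hGm : AEMeasurable G :=
    (ENNReal.continuous_rpow_const.measurable.comp hgm.ennreal_ofReal).aemeasurable
  have hH := ENNReal.lintegral_mul_le_Lp_mul_Lq volume hpq hFm hGm
  have hFG : ∀ w, F w * G w = ENNReal.ofReal (‖v - w‖ ^ α * gauss w) := by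
    intro w
    rw [hF, hG, ENNReal.ofReal_mul (Real.rpow_nonneg (norm_nonneg _) _), mul_assoc,
      ← ENNReal.rpow_add _ _ (ne_of_gt (ENNReal.ofReal_pos.2 (gauss_pos w)))
        ENNReal.ofReal_ne_top,
      show α/4 + (4-α)/4 = 1 by ring, ENNReal.rpow_one]
  have hFp : ∀ w, F w ^ p = ENNReal.ofReal (‖v - w‖ ^ (4:ℕ) * gauss w) := by
    intro w
    rw [hF, ENNReal.mul_rpow_of_nonneg _ _ hppos.le,
      ENNReal.ofReal_rpow_of_nonneg (Real.rpow_nonneg (norm_nonneg _) _) hppos.le,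
      ← ENNReal.rpow_mul,
      show α/4 * p = 1 by rw [hp]; field_simp, ENNReal.rpow_one,
      ← Real.rpow_mul (norm_nonneg _), show α * p = 4 by rw [hp]; field_simp,
      show (4:ℝ) = ((4:ℕ):ℝ) by norm_num, Real.rpow_natCast,
      ← ENNReal.ofReal_mul (by positivity)]
  have hGq : ∀ w, G w ^ q = ENNReal.ofReal (gauss w) := by
    intro w
    rw [hG, ← ENNReal.rpow_mul,
      show (4-α)/4 * q = 1 by rw [hq]; field_simp, ENNReal.rpow_one]
  have e1 : ∫⁻ w : E3, F w ^ p = ENNReal.ofReal A := by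
    simp_rw [hFp]
    rw [← MeasureTheory.ofReal_integral_eq_lintegral_ofReal h4i
      (Filter.Eventually.of_forall fun w => mul_nonneg (by positivity) (gauss_pos w).le), h4v]
  have e2 : ∫⁻ w : E3, G w ^ q = 1 := by
    simp_rw [hGq]
    rw [← MeasureTheory.ofReal_integral_eq_lintegral_ofReal hgi
      (Filter.Eventually.of_forall fun w => (gauss_pos w).le), hgv, ENNReal.ofReal_one]
  have key : (∫⁻ w : E3, ENNReal.ofReal (‖v - w‖ ^ α * gauss w))
      ≤ ENNReal.ofReal A ^ (α/4) := by
    calc (∫⁻ w : E3, ENNReal.ofReal (‖v - w‖ ^ α * gauss w)) = ∫⁻ w : E3, (F * G) w := by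
          simp_rw [Pi.mul_apply, hFG]
      _ ≤ (∫⁻ w : E3, F w ^ p) ^ (1/p) * (∫⁻ w : E3, G w ^ q) ^ (1/q) := hH
      _ = ENNReal.ofReal A ^ (α/4) := by
          rw [e1, e2, ENNReal.one_rpow, mul_one, show (1:ℝ)/p = α/4 by rw [hp, one_div_div]]
  have step2 : Jfun α v ≤ A ^ (α/4) := by
    rw [step1]
    have h := ENNReal.toReal_mono
      (ENNReal.rpow_ne_top_of_nonneg (by positivity) ENNReal.ofReal_ne_top) key
    rwa [ENNReal.ofReal_rpow_of_nonneg hA0 (by positivity),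
      ENNReal.toReal_ofReal (Real.rpow_nonneg hA0 _)] at h
  have h3 := add3_rpow_le (α/4) (by positivity) (by linarith)
    (a := ‖v‖^4) (b := 10*‖v‖^2) (c := 15) (by positivity) (by positivity) (by norm_num)
  have e4 : ((‖v‖:ℝ)^(4:ℕ))^(α/4) = ‖v‖^α := by
    rw [← Real.rpow_natCast ‖v‖ 4, ← Real.rpow_mul (norm_nonneg v),
      show ((4:ℕ):ℝ)*(α/4) = α by push_cast; ring]
  have e5 : ((10:ℝ)*‖v‖^2)^(α/4) = 10^(α/4) * ‖v‖^(α/2) := by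
    rw [Real.mul_rpow (by norm_num) (by positivity), ← Real.rpow_natCast ‖v‖ 2,
      ← Real.rpow_mul (norm_nonneg v), show ((2:ℕ):ℝ)*(α/4) = α/2 by push_cast; ring]
  rw [hA] at step2
  rw [e4, e5] at h3
  linarith
end
end

section
/- Let λ > 0 and C ≥ 1. There exist ε > 0 and C' > 0, depending only on λ and C, such that the following holds: if x : [0,∞) → [0,∞) is continuous, x(0) ≤ ε, and for all t ≥ 0, x(t) ≤ C e^{−λt} x(0) + C ε^{1/4} ∫₀^t e^{−λ(t−s)} x(s)^{5/4} ds, then x(t) ≤ C' e^{−λt} x(0) for all t ≥ 0. -/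
open MeasureTheory Real

private lemma rpow_quarter_le_one_add (a : ℝ) (ha : 0 ≤ a) : a ^ ((1:ℝ)/4) ≤ 1 + a := by
  rcases le_total a 1 with h | h
  · calc a ^ ((1:ℝ)/4) ≤ 1 ^ ((1:ℝ)/4) := Real.rpow_le_rpow ha h (by norm_num)
    _ = 1 := Real.one_rpow _
    _ ≤ 1 + a := by linarith
  · calc a ^ ((1:ℝ)/4) ≤ a ^ (1:ℝ) := Real.rpow_le_rpow_of_exponent_le h (by norm_num)
    _ = a := Real.rpow_one a
    _ ≤ 1 + a := by linarith

/-- Gronwall-type bootstrap estimate: a nonnegative continuous function on `[0,∞)`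
dominated by a linear exponentially decaying term plus a small superlinear Duhamel term
inherits the exponential decay, provided its initial value and the smallness parameter
`ε` are small enough. -/
theorem stmt19 (lam C : ℝ) (hlam : 0 < lam) (hC : 1 ≤ C) :
    ∃ ε > (0 : ℝ), ∃ C' > (0 : ℝ), ∀ x : ℝ → ℝ,
      ContinuousOn x (Set.Ici 0) → (∀ t, 0 ≤ t → 0 ≤ x t) → x 0 ≤ ε →
      (∀ t, 0 ≤ t → x t ≤ C * Real.exp (-lam * t) * x 0 +
        C * ε ^ ((1 : ℝ) / 4) *
          ∫ s in (0 : ℝ)..t, Real.exp (-lam * (t - s)) * x s ^ ((5 : ℝ) / 4)) →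
      ∀ t, 0 ≤ t → x t ≤ C' * Real.exp (-lam * t) * x 0 := by
  have hCpos : 0 < C := lt_of_lt_of_le one_pos hC
  set η : ℝ := min 1 (lam / (9 * C * (1 + 4 * C))) with hη_def
  have hden : 0 < 9 * C * (1 + 4 * C) := by positivity
  have hηpos : 0 < η := lt_min one_pos (by positivity)
  have hη1 : η ≤ 1 := min_le_left _ _
  have hηle : η ≤ lam / (9 * C * (1 + 4 * C)) := min_le_right _ _
  have hηle' : η * (9 * C * (1 + 4 * C)) ≤ lam := by
    rw [div_eq_mul_inv] at hηle
    calc η * (9 * C * (1 + 4 * C)) ≤ lam * (9 * C * (1 + 4 * C))⁻¹ * (9 * C * (1 + 4 * C)) := by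
          apply mul_le_mul_of_nonneg_right hηle hden.le
      _ = lam := by field_simp
  refine ⟨η ^ 4, by positivity, 2 * C, by positivity, ?_⟩
  intro x hxcont hxnn hx0 hxduh
  have hεpow : ((η ^ 4 : ℝ)) ^ ((1 : ℝ) / 4) = η := by
    rw [← Real.rpow_natCast η 4, ← Real.rpow_mul hηpos.le]
    norm_num
  have hε1 : η ^ 4 ≤ 1 := by
    calc η ^ 4 ≤ 1 ^ 4 := pow_le_pow_left₀ hηpos.le hη1 4
      _ = 1 := one_pow 4
  -- Key bootstrap claim
  have key : ∀ y0 : ℝ, 0 < y0 → y0 ≤ 2 * η ^ 4 → x 0 < y0 →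
      ∀ t, 0 ≤ t → x t ≤ 2 * C * Real.exp (-lam * t) * y0 := by
    intro y0 hy0 hy2 hx0y
    by_contra hcon
    push_neg at hcon
    set S : Set ℝ := {t : ℝ | 0 ≤ t ∧ 2 * C * Real.exp (-lam * t) * y0 < x t} with hS_def
    have hS : S.Nonempty := by
      obtain ⟨t, ht, hlt⟩ := hcon
      exact ⟨t, ht, hlt⟩
    have hbdd : BddBelow S := ⟨0, fun t ht => ht.1⟩
    set T : ℝ := sInf S with hT_def
    have hT0 : 0 ≤ T := le_csInf hS fun t ht => ht.1
    have hgcont : Continuous fun s : ℝ => 2 * C * Real.exp (-lam * s) * y0 := by fun_prop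
    have hle : ∀ s, 0 ≤ s → s < T → x s ≤ 2 * C * Real.exp (-lam * s) * y0 := by
      intro s hs hsT
      by_contra h
      push_neg at h
      exact absurd (csInf_le hbdd ⟨hs, h⟩) (not_le.mpr hsT)
    have hApos : 0 < 2 * C * y0 := by positivity
    -- x T ≤ g T
    have hxT_le : x T ≤ 2 * C * Real.exp (-lam * T) * y0 := by
      rcases eq_or_lt_of_le hT0 with h0 | hTpos
      · rw [← h0]
        have : Real.exp (-lam * 0) = 1 := by norm_num
        rw [this]
        nlinarith [hy0, hx0y]
      · have hcw : ContinuousWithinAt (fun s => x s - 2 * C * Real.exp (-lam * s) * y0)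
            (Set.Ico 0 T) T :=
          ((hxcont.continuousWithinAt (Set.mem_Ici.mpr hT0)).mono
            Set.Ico_subset_Ici_self).sub hgcont.continuousWithinAt
        have hmem : T ∈ closure (Set.Ico 0 T) := by
          rw [closure_Ico (ne_of_lt hTpos)]
          exact ⟨hT0, le_refl T⟩
        have hne : (nhdsWithin T (Set.Ico 0 T)).NeBot :=
          mem_closure_iff_nhdsWithin_neBot.mp hmem
        have hev : ∀ᶠ s in nhdsWithin T (Set.Ico 0 T),
            x s - 2 * C * Real.exp (-lam * s) * y0 ≤ 0 :=
          eventually_nhdsWithin_of_forall fun s hs => sub_nonpos.mpr (hle s hs.1 hs.2)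
        have hfin : x T - 2 * C * Real.exp (-lam * T) * y0 ≤ 0 := le_of_tendsto hcw hev
        linarith
    -- g T ≤ x T
    have hxT_ge : 2 * C * Real.exp (-lam * T) * y0 ≤ x T := by
      have hmem : T ∈ closure S := csInf_mem_closure hS hbdd
      have hne : (nhdsWithin T S).NeBot := mem_closure_iff_nhdsWithin_neBot.mp hmem
      have hcw : ContinuousWithinAt (fun s => x s - 2 * C * Real.exp (-lam * s) * y0) S T :=
        ((hxcont.continuousWithinAt (Set.mem_Ici.mpr hT0)).mono
          (fun t ht => ht.1)).sub hgcont.continuousWithinAt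
      have hev : ∀ᶠ s in nhdsWithin T S,
          (0:ℝ) ≤ x s - 2 * C * Real.exp (-lam * s) * y0 :=
        eventually_nhdsWithin_of_forall fun s hs => sub_nonneg.mpr hs.2.le
      have hfin : (0:ℝ) ≤ x T - 2 * C * Real.exp (-lam * T) * y0 := ge_of_tendsto hcw hev
      linarith
    have hIcc : ∀ s ∈ Set.Icc (0:ℝ) T, x s ≤ 2 * C * Real.exp (-lam * s) * y0 := by
      intro s hs
      rcases lt_or_eq_of_le hs.2 with h | h
      · exact hle s hs.1 h
      · rw [h]; exact hxT_le
    -- pointwise bound on the integrand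
    have hpt : ∀ s ∈ Set.Icc (0:ℝ) T,
        Real.exp (-lam * (T - s)) * x s ^ ((5:ℝ)/4) ≤
          (2 * C * y0) ^ ((5:ℝ)/4) * Real.exp (-lam * T) * Real.exp (-(lam/4) * s) := by
      intro s hs
      have h1 : x s ≤ 2 * C * y0 * Real.exp (-lam * s) := by
        have h := hIcc s hs
        have : 2 * C * Real.exp (-lam * s) * y0 = 2 * C * y0 * Real.exp (-lam * s) := by ring
        linarith [this ▸ h]
      have h2 : x s ^ ((5:ℝ)/4) ≤ (2 * C * y0 * Real.exp (-lam * s)) ^ ((5:ℝ)/4) :=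
        Real.rpow_le_rpow (hxnn s hs.1) h1 (by norm_num)
      have h3 : (2 * C * y0 * Real.exp (-lam * s)) ^ ((5:ℝ)/4) =
          (2 * C * y0) ^ ((5:ℝ)/4) * Real.exp (-lam * s * ((5:ℝ)/4)) := by
        rw [Real.mul_rpow hApos.le (Real.exp_pos _).le, ← Real.exp_mul]
      have hexp : Real.exp (-lam * (T - s)) * Real.exp (-lam * s * ((5:ℝ)/4)) =
          Real.exp (-lam * T) * Real.exp (-(lam/4) * s) := by
        rw [← Real.exp_add, ← Real.exp_add]
        congr 1
        ring
      calc Real.exp (-lam * (T - s)) * x s ^ ((5:ℝ)/4)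
          ≤ Real.exp (-lam * (T - s)) *
              ((2 * C * y0) ^ ((5:ℝ)/4) * Real.exp (-lam * s * ((5:ℝ)/4))) := by
            rw [← h3]
            exact mul_le_mul_of_nonneg_left h2 (Real.exp_pos _).le
        _ = (2 * C * y0) ^ ((5:ℝ)/4) *
              (Real.exp (-lam * (T - s)) * Real.exp (-lam * s * ((5:ℝ)/4))) := by ring
        _ = (2 * C * y0) ^ ((5:ℝ)/4) * (Real.exp (-lam * T) * Real.exp (-(lam/4) * s)) := by
            rw [hexp]
        _ = (2 * C * y0) ^ ((5:ℝ)/4) * Real.exp (-lam * T) * Real.exp (-(lam/4) * s) := by ring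
    -- integrability
    have hint1 : IntervalIntegrable (fun s => Real.exp (-lam * (T - s)) * x s ^ ((5:ℝ)/4))
        volume 0 T := by
      apply ContinuousOn.intervalIntegrable
      rw [Set.uIcc_of_le hT0]
      apply ContinuousOn.mul
      · exact (Continuous.continuousOn (by fun_prop))
      · exact (hxcont.mono (Set.Icc_subset_Ici_self)).rpow_const
          fun s _ => Or.inr (by norm_num)
    have hint2 : IntervalIntegrable
        (fun s => (2 * C * y0) ^ ((5:ℝ)/4) * Real.exp (-lam * T) * Real.exp (-(lam/4) * s))
        volume 0 T := (Continuous.intervalIntegrable (by fun_prop) _ _)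
    have hImono := intervalIntegral.integral_mono_on hT0 hint1 hint2 hpt
    -- compute the comparison integral
    have hIexp : (∫ s in (0:ℝ)..T, Real.exp (-(lam/4) * s)) =
        (1 - Real.exp (-(lam/4) * T)) * (4 / lam) := by
      have hderiv : ∀ s ∈ Set.uIcc (0:ℝ) T,
          HasDerivAt (fun u => -(4 / lam) * Real.exp (-(lam/4) * u))
            (Real.exp (-(lam/4) * s)) s := by
        intro s _
        have h1 : HasDerivAt (fun u : ℝ => -(lam/4) * u) (-(lam/4)) s := by
          simpa using (hasDerivAt_id s).const_mul (-(lam/4))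
        have h2 := (h1.exp).const_mul (-(4 / lam))
        refine h2.congr_deriv ?_
        field_simp
      rw [intervalIntegral.integral_eq_sub_of_hasDerivAt hderiv
        (Continuous.intervalIntegrable (by fun_prop) _ _)]
      rw [mul_zero, Real.exp_zero]
      ring
    have hIval : (∫ s in (0:ℝ)..T,
        (2 * C * y0) ^ ((5:ℝ)/4) * Real.exp (-lam * T) * Real.exp (-(lam/4) * s)) =
        (2 * C * y0) ^ ((5:ℝ)/4) * Real.exp (-lam * T) *
          ((1 - Real.exp (-(lam/4) * T)) * (4 / lam)) := by
      rw [intervalIntegral.integral_const_mul, hIexp]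
    have hrpow_pos : 0 < (2 * C * y0) ^ ((5:ℝ)/4) := Real.rpow_pos_of_pos hApos _
    have hIbound : (∫ s in (0:ℝ)..T, Real.exp (-lam * (T - s)) * x s ^ ((5:ℝ)/4)) ≤
        (2 * C * y0) ^ ((5:ℝ)/4) * Real.exp (-lam * T) * (4 / lam) := by
      rw [hIval] at hImono
      have h1 : (1 - Real.exp (-(lam/4) * T)) * (4 / lam) ≤ 4 / lam := by
        have := Real.exp_pos (-(lam/4) * T)
        have h4 : (0:ℝ) < 4 / lam := by positivity
        nlinarith
      calc (∫ s in (0:ℝ)..T, Real.exp (-lam * (T - s)) * x s ^ ((5:ℝ)/4))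
          ≤ (2 * C * y0) ^ ((5:ℝ)/4) * Real.exp (-lam * T) *
            ((1 - Real.exp (-(lam/4) * T)) * (4 / lam)) := hImono
        _ ≤ (2 * C * y0) ^ ((5:ℝ)/4) * Real.exp (-lam * T) * (4 / lam) := by
            apply mul_le_mul_of_nonneg_left h1
            positivity
    -- smallness of the rpow factor
    have hrpow_split : (2 * C * y0) ^ ((5:ℝ)/4) ≤ (1 + 4 * C) * (2 * C * y0) := by
      have h54 : ((5:ℝ)/4) = (1:ℝ)/4 + 1 := by norm_num
      rw [h54, Real.rpow_add hApos, Real.rpow_one]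
      have hq : (2 * C * y0) ^ ((1:ℝ)/4) ≤ 1 + 2 * C * y0 :=
        rpow_quarter_le_one_add _ hApos.le
      have hy0' : 2 * C * y0 ≤ 4 * C := by nlinarith [hε1, hy2, hCpos]
      have : (2 * C * y0) ^ ((1:ℝ)/4) ≤ 1 + 4 * C := by linarith
      exact mul_le_mul_of_nonneg_right this hApos.le
    -- Duhamel at T
    have hD := hxduh T hT0
    rw [hεpow] at hD
    have hexpT : (0:ℝ) < Real.exp (-lam * T) := Real.exp_pos _
    have hstep : C * η * (∫ s in (0:ℝ)..T, Real.exp (-lam * (T - s)) * x s ^ ((5:ℝ)/4)) ≤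
        C * Real.exp (-lam * T) * y0 := by
      have hCη : (0:ℝ) ≤ C * η := by positivity
      have h1 : C * η * (∫ s in (0:ℝ)..T, Real.exp (-lam * (T - s)) * x s ^ ((5:ℝ)/4)) ≤
          C * η * ((2 * C * y0) ^ ((5:ℝ)/4) * Real.exp (-lam * T) * (4 / lam)) :=
        mul_le_mul_of_nonneg_left hIbound hCη
      have h2 : C * η * ((2 * C * y0) ^ ((5:ℝ)/4) * Real.exp (-lam * T) * (4 / lam)) ≤
          C * η * ((1 + 4 * C) * (2 * C * y0) * Real.exp (-lam * T) * (4 / lam)) := by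
        apply mul_le_mul_of_nonneg_left _ hCη
        apply mul_le_mul_of_nonneg_right _ (by positivity)
        exact mul_le_mul_of_nonneg_right hrpow_split hexpT.le
      have h3 : C * η * ((1 + 4 * C) * (2 * C * y0) * Real.exp (-lam * T) * (4 / lam)) ≤
          C * Real.exp (-lam * T) * y0 := by
        rw [div_eq_mul_inv]
        have hlaminv : (0:ℝ) < lam⁻¹ := by positivity
        have hkey : η * (8 * C * (1 + 4 * C)) ≤ lam := by
          have h9 : η * (9 * C * (1 + 4 * C)) =
              η * (8 * C * (1 + 4 * C)) + η * (C * (1 + 4 * C)) := by ring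
          have hp : 0 ≤ η * (C * (1 + 4 * C)) := by positivity
          linarith
        have hone : η * (8 * C * (1 + 4 * C)) * lam⁻¹ ≤ 1 := by
          calc η * (8 * C * (1 + 4 * C)) * lam⁻¹ ≤ lam * lam⁻¹ :=
                mul_le_mul_of_nonneg_right hkey hlaminv.le
            _ = 1 := by field_simp
        have heq : C * η * ((1 + 4 * C) * (2 * C * y0) * Real.exp (-lam * T) * (4 * lam⁻¹)) =
            C * Real.exp (-lam * T) * y0 * (η * (8 * C * (1 + 4 * C)) * lam⁻¹) := by ring
        rw [heq]
        calc C * Real.exp (-lam * T) * y0 * (η * (8 * C * (1 + 4 * C)) * lam⁻¹) ≤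
              C * Real.exp (-lam * T) * y0 * 1 :=
              mul_le_mul_of_nonneg_left hone (by positivity)
          _ = C * Real.exp (-lam * T) * y0 := mul_one _
      linarith
    have hfirst : C * Real.exp (-lam * T) * x 0 < C * Real.exp (-lam * T) * y0 :=
      mul_lt_mul_of_pos_left hx0y (by positivity)
    have : x T < 2 * C * Real.exp (-lam * T) * y0 := by
      calc x T ≤ C * Real.exp (-lam * T) * x 0 +
            C * η * (∫ s in (0:ℝ)..T, Real.exp (-lam * (T - s)) * x s ^ ((5:ℝ)/4)) := hD
        _ < C * Real.exp (-lam * T) * y0 + C * Real.exp (-lam * T) * y0 := by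
            apply add_lt_add_of_lt_of_le hfirst hstep
        _ = 2 * C * Real.exp (-lam * T) * y0 := by ring
    linarith
  -- pass to the limit y0 → x 0
  intro t ht
  by_contra hcon
  push_neg at hcon
  set B : ℝ := 2 * C * Real.exp (-lam * t) with hB_def
  have hBpos : 0 < B := by positivity
  set d : ℝ := x t - B * x 0 with hd_def
  have hdpos : 0 < d := by
    have : B * x 0 = 2 * C * Real.exp (-lam * t) * x 0 := by ring
    simp only [hd_def]
    linarith [this ▸ hcon]
  set δ : ℝ := min (η ^ 4) (d / (2 * B)) with hδ_def
  have hδpos : 0 < δ := lt_min (by positivity) (by positivity)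
  have hδ1 : δ ≤ η ^ 4 := min_le_left _ _
  have hδ2 : δ ≤ d / (2 * B) := min_le_right _ _
  have h0 := hxnn 0 le_rfl
  have hk := key (x 0 + δ) (by linarith) (by linarith) (by linarith) t ht
  have hBδ : B * δ ≤ d / 2 := by
    calc B * δ ≤ B * (d / (2 * B)) := mul_le_mul_of_nonneg_left hδ2 hBpos.le
      _ = d / 2 := by field_simp
  have : x t ≤ B * x 0 + B * δ := by
    have : 2 * C * Real.exp (-lam * t) * (x 0 + δ) = B * x 0 + B * δ := by ring
    linarith [this ▸ hk]
  linarith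
end
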